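/- arXiv:1908.00129 — 3 statements merged into one kernel-verified Lean document; each statement's English description precedes it below -/
import Mathlib

section
/- Let O be a strict p-ring with residue ring R̄ = O/pO (a perfect ring of characteristic p). For a polynomial f ∈ O[X_1,…,X_n], a point x̂ = (x̂_1,…,x̂_n) ∈ O^n, and l ∈ ℕ, the generic valuation ν_{p,x}(f) := min{ ν_p(f(ŷ)) : ŷ ∈ O^n, ρ_l(ŷ) = ρ_l(x̂) } equals ν_p(f(x̂_1 + p^l·Z_1, …, x̂_n + p^l·Z_n)), where Z_1,…,Z_n are indeterminates and ν_p of a polynomial is the minimal p-adic valuation of its coefficients. -/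
/-! STATEMENT 5: For `O = W(k)` (a strict `p`-ring with perfect residue ring `k`),
a polynomial `f ∈ O[X₁,…,Xₙ]`, a point `x̂ ∈ Oⁿ` and `l ∈ ℕ`, the generic valuation
`ν_{p,x}(f) = min { ν_p(f(ŷ)) : ρ_l(ŷ) = ρ_l(x̂) }` equals the Gauss valuation
`ν_p(f(x̂₁ + p^l·Z₁, …, x̂ₙ + p^l·Zₙ))` (minimal valuation of a coefficient). -/

open MvPolynomial

/-- The Gauss `p`-adic valuation of a multivariate polynomial over `O`: the minimal
`p`-adic valuation of one of its coefficients (`⊤` for the zero polynomial). -/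
noncomputable def polyVal {O : Type} [CommRing O] {n : ℕ} (p : O)
    (f : MvPolynomial (Fin n) O) : ℕ∞ :=
  ⨅ m : (Fin n →₀ ℕ), emultiplicity p (MvPolynomial.coeff m f)

/-- The generic valuation `ν_{p,x}(f)` of `f` at the truncation `x = ρ_l(x̂)`: the
infimum of the valuations `ν_p(f(ŷ))` over all `ŷ` whose first `l` Witt components agree
with those of `x̂`. -/
noncomputable def genericVal (p : ℕ) [hp : Fact p.Prime] {k : Type} [CommRing k]
    {n : ℕ} (l : ℕ) (xh : Fin n → WittVector p k)
    (f : MvPolynomial (Fin n) (WittVector p k)) : ℕ∞ :=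
  ⨅ yh : {yh : Fin n → WittVector p k //
      ∀ i, WittVector.truncate l (yh i) = WittVector.truncate l (xh i)},
    emultiplicity (p : WittVector p k) (MvPolynomial.eval yh.1 f)


private lemma enat_le_of_forall {a b : ℕ∞} (h : ∀ m : ℕ, (m : ℕ∞) ≤ a → (m : ℕ∞) ≤ b) :
    a ≤ b := by
  induction a using ENat.recTopCoe with
  | top =>
    induction b using ENat.recTopCoe with
    | top => exact le_rfl
    | coe m =>
      have := h (m + 1) le_top
      exact absurd (Nat.cast_le.mp this) (by omega)
  | coe m => exact h m le_rfl

private lemma pow_p_dvd_iff {p : ℕ} [hp : Fact p.Prime] {k : Type} [CommRing k] [CharP k p]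
    [PerfectRing k p] (l : ℕ) (a : WittVector p k) :
    (p : WittVector p k) ^ l ∣ a ↔ ∀ i < l, a.coeff i = 0 := by
  constructor
  · rintro ⟨z, rfl⟩
    induction l generalizing z with
    | zero => intro i hi; omega
    | succ l ih =>
      intro i hi
      have hrw : (p : WittVector p k) ^ (l + 1) * z = ((p : WittVector p k) ^ l * z) * p := by
        ring
      rw [hrw]
      cases i with
      | zero => exact WittVector.mul_charP_coeff_zero _
      | succ j =>
        rw [WittVector.mul_charP_coeff_succ]
        rw [ih z j (by omega)]
        exact zero_pow hp.out.ne_zero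
  · intro h
    obtain ⟨b, hb⟩ := (WittVector.frobenius_bijective p k).surjective.iterate l (a.shift l)
    refine ⟨b, ?_⟩
    have hcm : a = (WittVector.verschiebung^[l] (WittVector.frobenius^[l] b)) := by
      rw [hb]
      exact WittVector.eq_iterate_verschiebung h
    have hvf : (⇑WittVector.verschiebung ∘ ⇑WittVector.frobenius : WittVector p k → WittVector p k)
        = (fun x => (p : WittVector p k) * x) := by
      funext x
      rw [Function.comp_apply, WittVector.verschiebung_frobenius x, mul_comm]
    rw [hcm, ← Function.comp_apply (f := (⇑WittVector.verschiebung)^[l]),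
      ← Function.Commute.comp_iterate
        (WittVector.verschiebung_frobenius_comm (p := p) (R := k)) l, hvf,
      mul_left_iterate]

theorem stmt5 (p : ℕ) [Fact p.Prime] (k : Type) [Field k] [IsAlgClosed k] [CharP k p]
    {n : ℕ} (l : ℕ) (xh : Fin n → WittVector p k)
    (f : MvPolynomial (Fin n) (WittVector p k)) :
    genericVal p l xh f =
      polyVal (p : WittVector p k)
        (MvPolynomial.bind₁
          (fun i => MvPolynomial.C (xh i) +
            MvPolynomial.C ((p : WittVector p k) ^ l) * MvPolynomial.X i) f) := by
  classical
  haveI : IsDiscreteValuationRing (WittVector p k) := WittVector.isDiscreteValuationRing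
  have hprime : Prime (p : WittVector p k) :=
    (UniqueFactorizationMonoid.irreducible_iff_prime).mp (WittVector.irreducible p)
  have hp0 : (p : WittVector p k) ≠ 0 := WittVector.p_nonzero p k
  set g := MvPolynomial.bind₁
      (fun i => MvPolynomial.C (xh i) +
        MvPolynomial.C ((p : WittVector p k) ^ l) * MvPolynomial.X i) f with hg
  have keyeval : ∀ z : Fin n → WittVector p k,
      eval z g = eval (fun i => xh i + (p : WittVector p k) ^ l * z i) f := by
    intro z
    rw [hg]
    show eval₂Hom (RingHom.id _) z _ = eval₂Hom (RingHom.id _) (fun i => xh i + (p : WittVector p k) ^ l * z i) f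
    rw [eval₂Hom_bind₁]
    refine MvPolynomial.eval₂Hom_congr rfl ?_ rfl
    funext i
    simp
  have step2 : ∀ z : Fin n → WittVector p k,
      polyVal (p : WittVector p k) g ≤ emultiplicity (p : WittVector p k) (eval z g) := by
    intro z
    apply enat_le_of_forall
    intro N hN
    rw [← pow_dvd_iff_le_emultiplicity]
    have hdvd : (MvPolynomial.C ((p : WittVector p k) ^ N) : MvPolynomial (Fin n) _) ∣ g := by
      rw [MvPolynomial.C_dvd_iff_dvd_coeff]
      intro m
      exact pow_dvd_of_le_emultiplicity (le_trans hN (iInf_le _ m))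
    simpa using map_dvd (eval z) hdvd
  refine le_antisymm ?_ ?_
  · -- genericVal ≤ polyVal
    by_cases hg0 : g = 0
    · rw [genericVal]
      have : polyVal (p : WittVector p k) g = ⊤ := by
        simp [polyVal, hg0]
      rw [this]
      exact le_top
    · obtain ⟨m₀, hm₀⟩ : ∃ m, MvPolynomial.coeff m g ≠ 0 := by
        by_contra hcon
        push_neg at hcon
        exact hg0 (MvPolynomial.ext _ _ (fun m => by simp [hcon m]))
      have hfin : polyVal (p : WittVector p k) g ≠ ⊤ := by
        intro htop
        have h1 : emultiplicity (p : WittVector p k) (MvPolynomial.coeff m₀ g) = ⊤ :=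
          top_le_iff.mp (htop ▸ iInf_le _ m₀)
        exact (emultiplicity_eq_top.mp h1) (FiniteMultiplicity.of_prime_left hprime hm₀)
      obtain ⟨v, hv⟩ := WithTop.ne_top_iff_exists.mp hfin
      have hdvdall : (MvPolynomial.C ((p : WittVector p k) ^ v) : MvPolynomial (Fin n) _) ∣ g := by
        rw [MvPolynomial.C_dvd_iff_dvd_coeff]
        intro m
        exact pow_dvd_of_le_emultiplicity (hv.le.trans (iInf_le _ m))
      obtain ⟨h, hh⟩ := hdvdall
      have hnot : ∃ m, ¬ (p : WittVector p k) ∣ MvPolynomial.coeff m h := by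
        by_contra hcon
        push_neg at hcon
        have hle : ∀ m : Fin n →₀ ℕ, ((v + 1 : ℕ) : ℕ∞) ≤
            emultiplicity (p : WittVector p k) (MvPolynomial.coeff m g) := by
          intro m
          rw [← pow_dvd_iff_le_emultiplicity]
          obtain ⟨c, hc⟩ := hcon m
          refine ⟨c, ?_⟩
          rw [hh, MvPolynomial.coeff_C_mul, hc]
          ring
        have : ((v + 1 : ℕ) : ℕ∞) ≤ polyVal (p : WittVector p k) g := le_iInf hle
        rw [← hv] at this
        exact absurd (Nat.cast_le.mp this) (by omega)
      obtain ⟨m₁, hm₁⟩ := hnot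
      set π := (WittVector.constantCoeff : WittVector p k →+* k) with hπ
      have hπker : ∀ a : WittVector p k, π a = 0 → (p : WittVector p k) ∣ a := by
        intro a ha
        have h1 : (p : WittVector p k) ^ 1 ∣ a := by
          rw [pow_p_dvd_iff]
          intro i hi
          interval_cases i
          exact ha
        simpa using h1
      have hbar : (MvPolynomial.map π h) ≠ 0 := by
        intro h0
        apply hm₁
        apply hπker
        have := congrArg (MvPolynomial.coeff m₁) h0
        simpa [MvPolynomial.coeff_map] using this
      obtain ⟨zb, hzb⟩ : ∃ zb : Fin n → k, eval zb (MvPolynomial.map π h) ≠ 0 := by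
        by_contra hcon
        push_neg at hcon
        exact hbar (MvPolynomial.funext (fun x => by simp [hcon x]))
      set z : Fin n → WittVector p k := fun i => WittVector.teichmuller p (zb i) with hz
      have hπz : (π ∘ z) = zb := by
        funext i
        exact WittVector.teichmuller_coeff_zero p (zb i)
      have hπeval : π (eval z h) = eval zb (MvPolynomial.map π h) := by
        have h1 := MvPolynomial.eval₂_comp_left π (RingHom.id (WittVector p k)) z h
        rw [← MvPolynomial.eval₂_eq_eval_map, ← hπz]
        rw [show (MvPolynomial.eval z) h = eval₂ (RingHom.id _) z h from rfl]
        rw [h1, RingHom.comp_id]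
      have hevalh : ¬ (p : WittVector p k) ∣ eval z h := by
        intro hdvd
        apply hzb
        rw [← hπeval]
        obtain ⟨c, hc⟩ := hdvd
        rw [hc, map_mul]
        have : π (p : WittVector p k) = 0 := by
          simp [hπ, WittVector.coeff_p_zero]
        rw [this, zero_mul]
      set y : Fin n → WittVector p k := fun i => xh i + (p : WittVector p k) ^ l * z i with hy
      have hyt : ∀ i, WittVector.truncate l (y i) = WittVector.truncate l (xh i) := by
        intro i
        have h0 : WittVector.truncate l ((p : WittVector p k) ^ l * z i) = 0 := by
          have h2 := (pow_p_dvd_iff l ((p : WittVector p k) ^ l * z i)).mp ⟨z i, rfl⟩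
          exact RingHom.mem_ker.mp
            ((WittVector.mem_ker_truncate (p := p) (n := l) _).mpr h2)
        rw [hy]
        simp only [map_add, h0, add_zero]
      refine le_trans (iInf_le _ ⟨y, hyt⟩) ?_
      have he : eval y f = eval z g := (keyeval z).symm
      rw [he]
      have hge : eval z g = (p : WittVector p k) ^ v * eval z h := by
        rw [hh, map_mul, MvPolynomial.eval_C]
      rw [hge, ← hv]
      refine le_of_eq ?_
      rw [emultiplicity_mul hprime, emultiplicity_pow_self hp0 hprime.not_unit,
        emultiplicity_eq_zero.mpr hevalh, add_zero]
      rfl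
  · -- polyVal ≤ genericVal
    refine le_iInf (fun yy => ?_)
    obtain ⟨y, hyt⟩ := yy
    have hzex : ∀ i, ∃ c, y i = xh i + (p : WittVector p k) ^ l * c := by
      intro i
      have h0 : WittVector.truncate l (y i - xh i) = 0 := by
        rw [map_sub, hyt i, sub_self]
      have h1 : ∀ j < l, (y i - xh i).coeff j = 0 :=
        (WittVector.mem_ker_truncate (p := p) (n := l) _).mp (RingHom.mem_ker.mpr h0)
      obtain ⟨c, hc⟩ := (pow_p_dvd_iff l _).mpr h1
      exact ⟨c, by rw [← hc]; ring⟩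
    choose z hzdef using hzex
    have he : eval y f = eval z g := by
      rw [keyeval z]
      exact congrArg (fun w => eval w f) (funext hzdef)
    rw [he]
    exact step2 z
end

section
/- Let O = W(k) for k algebraically closed of characteristic p, f ∈ O[X_1,…,X_n] a polynomial, l ∈ ℕ, and x ∈ k^{n·l}. Then for any x̂ ∈ O^n with ρ_l(x̂) = x, there exists ẑ ∈ W(F̄_p)^n ⊆ O^n such that ν_p(f(x̂ + p^l · ẑ)) = ν_{p,x}(f), the generic valuation of f at x. -/
/-!
STATEMENT 6: Let `O = W(k)` for `k` algebraically closed of characteristic `p`,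
`f ∈ O[X₁,…,Xₙ]`, `l ∈ ℕ` and `x̂ ∈ Oⁿ`. Then there exists `ẑ ∈ W(F̄_p)ⁿ ⊆ Oⁿ` such that
`ν_p(f(x̂ + p^l·ẑ))` equals the generic valuation `ν_{p,x}(f)` of `f` at `x = ρ_l(x̂)`.
Here `F̄_p` is an algebraic closure of the prime field, embedded into `k`.
-/


open WittVector MvPolynomial

namespace Stmt6Aux

variable {p : ℕ} [hp : Fact p.Prime]

local notation "𝕎" => WittVector p

section Dvd

variable {k : Type} [Field k] [CharP k p] [PerfectRing k p]

lemma coeff_mul_pow_p (c : 𝕎 k) (l : ℕ) :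
    ∀ i < l, (c * (p : 𝕎 k) ^ l).coeff i = 0 := by
  induction l generalizing c with
  | zero => intro i hi; omega
  | succ l ih =>
    intro i hi
    have h : c * (p : 𝕎 k) ^ (l + 1) = (c * (p : 𝕎 k) ^ l) * p := by ring
    rw [h]
    cases i with
    | zero => exact WittVector.mul_charP_coeff_zero _
    | succ i =>
      rw [WittVector.mul_charP_coeff_succ, ih c i (by omega),
        zero_pow hp.out.ne_zero]

lemma iterate_vf_aux (l : ℕ) (b : 𝕎 k) :
    (fun x : 𝕎 k => verschiebung (frobenius x))^[l] b = b * (p : 𝕎 k) ^ l := by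
  induction l generalizing b with
  | zero => simp
  | succ l ih =>
    rw [Function.iterate_succ_apply, WittVector.verschiebung_frobenius, ih]
    ring

lemma iterate_vf (l : ℕ) (b : 𝕎 k) :
    verschiebung^[l] (frobenius^[l] b) = b * (p : 𝕎 k) ^ l := by
  have hcomm := (WittVector.verschiebung_frobenius_comm (p := p) (R := k)).comp_iterate l
  have h1 : verschiebung^[l] (frobenius^[l] b)
      = (fun x : 𝕎 k => verschiebung (frobenius x))^[l] b := by
    have := congr_fun hcomm b
    exact this.symm
  rw [h1, iterate_vf_aux]

lemma pow_p_dvd_iff (a : 𝕎 k) (l : ℕ) :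
    (p : 𝕎 k) ^ l ∣ a ↔ ∀ i < l, a.coeff i = 0 := by
  constructor
  · rintro ⟨c, rfl⟩ i hi
    rw [mul_comm]
    exact coeff_mul_pow_p c l i hi
  · intro h
    obtain ⟨b, hb⟩ := (WittVector.frobenius_bijective p k).surjective.iterate l (a.shift l)
    refine ⟨b, ?_⟩
    have h1 : a = verschiebung^[l] (a.shift l) := WittVector.eq_iterate_verschiebung h
    rw [← hb, iterate_vf] at h1
    rw [h1]; ring

lemma truncate_eq_truncate_iff (a b : 𝕎 k) (l : ℕ) :
    WittVector.truncate l a = WittVector.truncate l b ↔ (p : 𝕎 k) ^ l ∣ a - b := by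
  rw [pow_p_dvd_iff, ← WittVector.mem_ker_truncate, RingHom.mem_ker, map_sub,
    sub_eq_zero]

end Dvd

section Poly

variable {k : Type} [CommRing k]

/-- `G : (Fin n → 𝕎 k) → 𝕎 k` is a coefficientwise polynomial function of the
Witt coefficients of its arguments. -/
def IsCoeffPoly {n : ℕ} (G : (Fin n → 𝕎 k) → 𝕎 k) : Prop :=
  ∀ j : ℕ, ∃ P : MvPolynomial (Fin n × ℕ) k,
    ∀ z, (G z).coeff j = MvPolynomial.eval (fun q => (z q.1).coeff q.2) P

lemma eval_aeval_int {σ τ : Type*} (φ : MvPolynomial σ ℤ) (g : σ → MvPolynomial τ k)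
    (v : τ → k) :
    MvPolynomial.eval v (MvPolynomial.aeval g φ)
      = MvPolynomial.aeval (fun s => MvPolynomial.eval v (g s)) φ := by
  rw [MvPolynomial.aeval_def, MvPolynomial.aeval_def,
    MvPolynomial.eval₂_comp_left (MvPolynomial.eval v) (algebraMap ℤ _) g φ]
  have h1 : (MvPolynomial.eval v).comp (algebraMap ℤ (MvPolynomial τ k))
      = algebraMap ℤ k := Subsingleton.elim _ _
  rw [h1]
  rfl

lemma IsCoeffPoly.add {n : ℕ} {G H : (Fin n → 𝕎 k) → 𝕎 k} (hG : IsCoeffPoly G)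
    (hH : IsCoeffPoly H) : IsCoeffPoly (fun z => G z + H z) := by
  choose PG hPG using hG
  choose PH hPH using hH
  intro j
  refine ⟨MvPolynomial.aeval
    (Function.uncurry ![fun m => PG m, fun m => PH m]) (wittAdd p j), fun z => ?_⟩
  rw [WittVector.add_coeff, peval, eval_aeval_int]
  have hfun : (fun s : Fin 2 × ℕ => MvPolynomial.eval (fun q => (z q.1).coeff q.2)
      (Function.uncurry ![fun m => PG m, fun m => PH m] s))
      = Function.uncurry ![(G z).coeff, (H z).coeff] := by
    funext q
    obtain ⟨i, m⟩ := q
    fin_cases i <;> simp [Function.uncurry, hPG, hPH]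
  rw [hfun]

lemma IsCoeffPoly.mul {n : ℕ} {G H : (Fin n → 𝕎 k) → 𝕎 k} (hG : IsCoeffPoly G)
    (hH : IsCoeffPoly H) : IsCoeffPoly (fun z => G z * H z) := by
  choose PG hPG using hG
  choose PH hPH using hH
  intro j
  refine ⟨MvPolynomial.aeval
    (Function.uncurry ![fun m => PG m, fun m => PH m]) (wittMul p j), fun z => ?_⟩
  rw [WittVector.mul_coeff, peval, eval_aeval_int]
  have hfun : (fun s : Fin 2 × ℕ => MvPolynomial.eval (fun q => (z q.1).coeff q.2)
      (Function.uncurry ![fun m => PG m, fun m => PH m] s))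
      = Function.uncurry ![(G z).coeff, (H z).coeff] := by
    funext q
    obtain ⟨i, m⟩ := q
    fin_cases i <;> simp [Function.uncurry, hPG, hPH]
  rw [hfun]

lemma isCoeffPoly_const {n : ℕ} (c : 𝕎 k) : IsCoeffPoly (fun _ : Fin n → 𝕎 k => c) :=
  fun j => ⟨MvPolynomial.C (c.coeff j), fun z => by simp⟩

lemma isCoeffPoly_proj {n : ℕ} (i : Fin n) : IsCoeffPoly (fun z : Fin n → 𝕎 k => z i) :=
  fun j => ⟨MvPolynomial.X (i, j), fun z => by simp⟩

lemma isCoeffPoly_eval {n : ℕ} (xh : Fin n → 𝕎 k) (l : ℕ)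
    (f : MvPolynomial (Fin n) (𝕎 k)) :
    IsCoeffPoly (fun z => MvPolynomial.eval (fun i => xh i + (p : 𝕎 k) ^ l * z i) f) := by
  induction f using MvPolynomial.induction_on with
  | C a => simpa using isCoeffPoly_const a
  | add f g hf hg =>
    simp only [map_add]
    exact hf.add hg
  | mul_X f i hf =>
    simp only [map_mul, MvPolynomial.eval_X]
    exact hf.mul ((isCoeffPoly_const (xh i)).add
      ((isCoeffPoly_const ((p : 𝕎 k) ^ l)).mul (isCoeffPoly_proj i)))

end Poly

section Dense

variable {k F : Type} [Field k] [Field F] [Infinite F]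

lemma exists_eval_ne_zero_fin (ι : F →+* k) :
    ∀ (N : ℕ) (q : MvPolynomial (Fin N) k), q ≠ 0 →
      ∃ w : Fin N → k, (∀ i, w i ∈ Set.range ι) ∧ MvPolynomial.eval w q ≠ 0 := by
  intro N
  induction N with
  | zero =>
    intro q hq
    obtain ⟨a, rfl⟩ := MvPolynomial.C_surjective (Fin 0) q
    refine ⟨fun i => i.elim0, fun i => i.elim0, ?_⟩
    rw [MvPolynomial.eval_C]
    intro h
    exact hq (by rw [h, map_zero])
  | succ N ih =>
    intro q hq
    set q' := MvPolynomial.finSuccEquiv k N q with hq'def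
    have hq' : q' ≠ 0 := by
      intro h
      apply hq
      exact (MvPolynomial.finSuccEquiv k N).injective
        (by rw [map_zero, ← hq'def]; exact h)
    have hlc : q'.leadingCoeff ≠ 0 := Polynomial.leadingCoeff_ne_zero.mpr hq'
    obtain ⟨w, hw, hew⟩ := ih q'.leadingCoeff hlc
    set q'' := q'.map (MvPolynomial.eval w) with hq''def
    have hq'' : q'' ≠ 0 := by
      intro h
      apply hew
      have hc : q''.coeff q'.natDegree = 0 := by rw [h]; simp
      rw [hq''def, Polynomial.coeff_map] at hc
      exact hc
    have hinf : (Set.range (fun x : F => ι x)).Infinite :=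
      Set.infinite_range_of_injective ι.injective
    have hfin : {a : k | q''.IsRoot a}.Finite := Polynomial.finite_setOf_isRoot hq''
    obtain ⟨a, ha, hroot⟩ := (hinf.diff hfin).nonempty
    refine ⟨Fin.cons a w, ?_, ?_⟩
    · intro i
      refine Fin.cases ?_ ?_ i
      · exact ha
      · intro j
        simpa using hw j
    · rw [MvPolynomial.eval_eq_eval_mv_eval']
      exact hroot

lemma exists_eval_ne_zero {σ : Type} (ι : F →+* k) (g : MvPolynomial σ k) (hg : g ≠ 0) :
    ∃ v : σ → k, (∀ s, v s ∈ Set.range ι) ∧ MvPolynomial.eval v g ≠ 0 := by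
  classical
  obtain ⟨N, emb, hemb, q, rfl⟩ := MvPolynomial.exists_fin_rename g
  have hq : q ≠ 0 := by
    intro h
    exact hg (by rw [h, map_zero])
  obtain ⟨w, hw, hew⟩ := exists_eval_ne_zero_fin ι N q hq
  refine ⟨fun s => if h : ∃ i, emb i = s then w h.choose else ι 0, ?_, ?_⟩
  · intro s
    dsimp only
    split
    · exact hw _
    · exact ⟨0, rfl⟩
  · rw [MvPolynomial.eval_rename]
    have hcomp : ((fun s => if h : ∃ i, emb i = s then w h.choose else ι 0) ∘ emb) = w := by
      funext i
      simp only [Function.comp_apply]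
      have h : ∃ j, emb j = emb i := ⟨i, rfl⟩
      rw [dif_pos h]
      exact congrArg w (hemb h.choose_spec)
    rw [hcomp]
    exact hew

end Dense

end Stmt6Aux

set_option maxHeartbeats 2000000 in
theorem stmt6 (p : ℕ) [Fact p.Prime] (k : Type) [Field k] [IsAlgClosed k] [CharP k p]
    -- `F = F̄_p`, an algebraic closure of the prime field, with an embedding into `k`
    (F : Type) [Field F] [Algebra (ZMod p) F] [IsAlgClosure (ZMod p) F]
    (ι : F →+* k)
    {n : ℕ} (l : ℕ) (xh : Fin n → WittVector p k)
    (f : MvPolynomial (Fin n) (WittVector p k)) :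
    ∃ zh : Fin n → WittVector p k,
      (∀ i, zh i ∈ Set.range (WittVector.map ι)) ∧
        emultiplicity (p : WittVector p k)
            (MvPolynomial.eval (fun i => xh i + (p : WittVector p k) ^ l * zh i) f) =
          genericVal p l xh f := by
  classical
  have hF : IsAlgClosed F := IsAlgClosure.isAlgClosed (ZMod p)
  have hFinf : Infinite F := inferInstance
  have hgen : genericVal p l xh f = ⨅ yh : {yh : Fin n → WittVector p k //
      ∀ i, WittVector.truncate l (yh i) = WittVector.truncate l (xh i)},
    emultiplicity (p : WittVector p k) (MvPolynomial.eval yh.1 f) := rfl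
  by_cases htop : genericVal p l xh f = ⊤
  · refine ⟨fun _ => 0, fun i => ⟨0, by simp⟩, ?_⟩
    have hle : genericVal p l xh f ≤
        emultiplicity (p : WittVector p k) (MvPolynomial.eval xh f) :=
      iInf_le (fun yh : {yh : Fin n → WittVector p k //
          ∀ i, WittVector.truncate l (yh i) = WittVector.truncate l (xh i)} =>
        emultiplicity (p : WittVector p k) (MvPolynomial.eval yh.1 f))
        ⟨xh, fun i => rfl⟩
    have hx : (fun i => xh i + (p : WittVector p k) ^ l * (fun _ : Fin n =>
        (0 : WittVector p k)) i) = xh := by funext i; simp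
    rw [hx, htop]
    rw [htop] at hle
    exact top_le_iff.mp hle
  · obtain ⟨m, hm⟩ := WithTop.ne_top_iff_exists.mp htop
    have hlt0 : genericVal p l xh f < ((m + 1 : ℕ) : ℕ∞) := by
      rw [← hm]; exact Nat.cast_lt.mpr (Nat.lt_succ_self m)
    rw [hgen] at hlt0
    obtain ⟨⟨yh, hyh⟩, hyhlt⟩ := iInf_lt_iff.mp hlt0
    have hndvd : ¬ (p : WittVector p k) ^ (m + 1) ∣ MvPolynomial.eval yh f :=
      emultiplicity_lt_iff_not_dvd.mp hyhlt
    obtain ⟨j, hj, hcj⟩ : ∃ j < m + 1, (MvPolynomial.eval yh f).coeff j ≠ 0 := by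
      by_contra hc
      push_neg at hc
      exact hndvd ((Stmt6Aux.pow_p_dvd_iff _ _).mpr hc)
    have hdvd : ∀ i, (p : WittVector p k) ^ l ∣ yh i - xh i := fun i =>
      (Stmt6Aux.truncate_eq_truncate_iff _ _ _).mp (hyh i)
    choose w hw using hdvd
    have hyw : yh = fun i => xh i + (p : WittVector p k) ^ l * w i := by
      funext i
      linear_combination hw i
    obtain ⟨P, hP⟩ := Stmt6Aux.isCoeffPoly_eval xh l f j
    have hPne : P ≠ 0 := by
      intro h0
      apply hcj
      rw [hyw, hP w, h0, map_zero]
    obtain ⟨v, hv, hev⟩ := Stmt6Aux.exists_eval_ne_zero ι P hPne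
    set zh : Fin n → WittVector p k := fun i => WittVector.mk p (fun m' => v (i, m'))
      with hzh
    have hvv : (fun q : Fin n × ℕ => (zh q.1).coeff q.2) = v := rfl
    have hevalz : (MvPolynomial.eval
        (fun i => xh i + (p : WittVector p k) ^ l * zh i) f).coeff j ≠ 0 := by
      rw [hP zh, hvv]
      exact hev
    have hval : ∀ i, WittVector.truncate l (xh i + (p : WittVector p k) ^ l * zh i)
        = WittVector.truncate l (xh i) := by
      intro i
      rw [Stmt6Aux.truncate_eq_truncate_iff]
      exact ⟨zh i, by ring⟩
    refine ⟨zh, ?_, ?_⟩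
    · intro i
      choose u hu using fun m' => hv (i, m')
      refine ⟨WittVector.mk p u, ?_⟩
      ext m'
      rw [WittVector.map_coeff]
      simp [WittVector.coeff_mk, hu, hzh]
    · have h1 : genericVal p l xh f ≤ emultiplicity (p : WittVector p k)
          (MvPolynomial.eval (fun i => xh i + (p : WittVector p k) ^ l * zh i) f) :=
        iInf_le (fun yh : {yh : Fin n → WittVector p k //
            ∀ i, WittVector.truncate l (yh i) = WittVector.truncate l (xh i)} =>
          emultiplicity (p : WittVector p k) (MvPolynomial.eval yh.1 f))
          ⟨_, hval⟩
      have h2 : emultiplicity (p : WittVector p k)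
          (MvPolynomial.eval (fun i => xh i + (p : WittVector p k) ^ l * zh i) f)
            < ((m + 1 : ℕ) : ℕ∞) :=
        emultiplicity_lt_iff_not_dvd.mpr
          (fun hd => hevalz (((Stmt6Aux.pow_p_dvd_iff _ _).mp hd) j hj))
      rw [← hm] at h1 ⊢
      refine le_antisymm ?_ h1
      rwa [Nat.cast_add, Nat.cast_one, ENat.lt_add_one_iff (ENat.coe_ne_top m)] at h2
end

section
/- Let R be a strict p-ring with residue ring R̄ = R/pR. Then there is a unique ring homomorphism φ : R → W(R̄) to the ring of Witt vectors over R̄ such that composing φ with the projection W(R̄) → R̄ onto the first Witt component equals the canonical surjection R → R/pR. Moreover φ is an isomorphism. -/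
/-!
STATEMENT 10: Let `R` be a strict `p`-ring with residue ring `R̄ = R/pR` (so `p` is a
non-zero-divisor in `R`, `R` is `p`-adically complete and Hausdorff, and `R̄` is a
perfect ring of characteristic `p`). Then there is a unique ring homomorphism
`φ : R → W(R̄)` such that the first Witt component of `φ(r)` is the residue of `r`,
and moreover `φ` is an isomorphism (bijective).
-/

namespace Stmt10Aux
open Finset
set_option linter.unusedSectionVars false

variable {p : ℕ} [Fact p.Prime] {R : Type} [CommRing R]

local notation "Q" => R ⧸ Ideal.span {(p : R)}
local notation "mk" => Ideal.Quotient.mk (Ideal.span {(p : R)})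

noncomputable def lf : Q → R := Function.surjInv Ideal.Quotient.mk_surjective

lemma mk_lf (x : Q) : mk (lf x) = x := Function.surjInv_eq _ _

lemma mk_eq_iff (a b : R) : mk a = mk b ↔ (p : R) ∣ a - b := by
  rw [Ideal.Quotient.eq, Ideal.mem_span_singleton]

lemma mk_eq_of_dvd {a b : R} (h : (p : R) ∣ a - b) : mk a = mk b :=
  (mk_eq_iff a b).2 h

/-- truncated ghost polynomial -/
noncomputable def gh (p : ℕ) (n : ℕ) (x : ℕ → R) : R :=
  ∑ i ∈ Finset.range (n + 1), (p : R) ^ i * x i ^ p ^ (n - i)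

lemma gh_congr {n : ℕ} {s t : ℕ → R} (h : ∀ i ≤ n, mk (s i) = mk (t i)) :
    (p : R) ^ (n + 1) ∣ gh p n s - gh p n t := by
  rw [gh, gh, ← Finset.sum_sub_distrib]
  refine Finset.dvd_sum fun i hi => ?_
  rw [Finset.mem_range, Nat.lt_succ_iff] at hi
  have h1 : (p : R) ∣ s i - t i := (mk_eq_iff _ _).1 (h i hi)
  have h2 : (p : R) ^ (n - i + 1) ∣ s i ^ p ^ (n - i) - t i ^ p ^ (n - i) :=
    dvd_sub_pow_of_dvd_sub h1 _
  have : ((p:R) ^ i * s i ^ p ^ (n - i) - (p:R) ^ i * t i ^ p ^ (n - i))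
      = (s i ^ p ^ (n - i) - t i ^ p ^ (n - i)) * (p:R) ^ i := by ring
  rw [this]
  have hexp : (n - i + 1) + i = n + 1 := by omega
  calc (p : R) ^ (n + 1) = (p:R) ^ (n - i + 1) * (p:R) ^ i := by rw [← pow_add, hexp]
  _ ∣ (s i ^ p ^ (n - i) - t i ^ p ^ (n - i)) * (p:R) ^ i := mul_dvd_mul_right h2 _

lemma ghost_eq (n : ℕ) (x : WittVector p R) :
    WittVector.ghostComponent n x = gh p n x.coeff := by
  rw [WittVector.ghostComponent_apply, aeval_wittPolynomial]
  rfl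

/-- iterated inverse-Frobenius -/
noncomputable def epow (e : Q ≃+* Q) : ℕ → (Q ≃+* Q)
  | 0 => RingEquiv.refl _
  | n + 1 => e.trans (epow e n)

@[simp] lemma epow_zero (e : Q ≃+* Q) (x : Q) : epow e 0 x = x := rfl

lemma epow_succ (e : Q ≃+* Q) (n : ℕ) (x : Q) : epow e (n + 1) x = epow e n (e x) := rfl

lemma epow_add (e : Q ≃+* Q) (m k : ℕ) (x : Q) :
    epow e (m + k) x = epow e m (epow e k x) := by
  induction k generalizing x with
  | zero => rfl
  | succ k ih => rw [← Nat.add_assoc, epow_succ, epow_succ, ih]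

lemma epow_symm_cancel (e : Q ≃+* Q) {i n : ℕ} (hi : i ≤ n) (x : Q) :
    epow e n ((epow e i).symm x) = epow e (n - i) x := by
  conv_lhs => rw [show n = (n - i) + i by omega]
  rw [epow_add, RingEquiv.apply_symm_apply]


/-! ### the approximations θₙ -/

variable (e : (R ⧸ Ideal.span {(p : R)}) ≃+* (R ⧸ Ideal.span {(p : R)}))

/-- `θₙ(a) = Σ_{i ≤ n} pⁱ · (lift of σ⁻ⁿ aᵢ)^(p^(n-i))` -/
noncomputable def thetaAux (n : ℕ) (a : WittVector p Q) : R :=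
  gh p n (fun i => lf (epow e n (a.coeff i)))

/-- canonical coefficientwise lift of the `σ⁻ⁿ`-twist of `a` to `W(R)` -/
noncomputable def wlift (n : ℕ) (a : WittVector p Q) : WittVector p R :=
  WittVector.mk p (fun i => lf (epow e n (a.coeff i)))

lemma wlift_coeff (n : ℕ) (a : WittVector p Q) (i : ℕ) :
    (wlift e n a).coeff i = lf (epow e n (a.coeff i)) := by
  simp [wlift, WittVector.coeff_mk]

lemma thetaAux_eq_gh_wlift (n : ℕ) (a : WittVector p Q) :
    thetaAux e n a = gh p n (wlift e n a).coeff := by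
  simp [thetaAux, wlift_coeff, gh]

lemma map_wlift (n : ℕ) (a : WittVector p Q) :
    WittVector.map (Ideal.Quotient.mk (Ideal.span {(p : R)})) (wlift e n a)
      = WittVector.map ((epow e n : Q ≃+* Q) : Q →+* Q) a := by
  ext i
  simp [WittVector.map_coeff, wlift_coeff, mk_lf]

/-- master lemma: if `x : W(R)` lifts the `σ⁻ⁿ`-twist of `a`, then
`θₙ(a) ≡ wₙ(x) mod p^(n+1)`. -/
lemma thetaAux_sub_ghost (n : ℕ) (a : WittVector p Q) (x : WittVector p R)
    (hx : WittVector.map (Ideal.Quotient.mk (Ideal.span {(p : R)})) x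
      = WittVector.map ((epow e n : Q ≃+* Q) : Q →+* Q) a) :
    (p : R) ^ (n + 1) ∣ thetaAux e n a - WittVector.ghostComponent n x := by
  rw [ghost_eq, thetaAux_eq_gh_wlift]
  refine gh_congr fun i _ => ?_
  have h1 : mk ((wlift e n a).coeff i) = epow e n (a.coeff i) := by
    rw [wlift_coeff, mk_lf]
  have h2 : mk (x.coeff i) = epow e n (a.coeff i) := by
    have := congrArg (fun z => WittVector.coeff z i) hx
    simpa [WittVector.map_coeff] using this
  rw [h1, h2]

lemma thetaAux_add (n : ℕ) (a b : WittVector p Q) :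
    (p : R) ^ (n + 1) ∣ thetaAux e n (a + b) - (thetaAux e n a + thetaAux e n b) := by
  have hx : WittVector.map (Ideal.Quotient.mk (Ideal.span {(p : R)}))
      (wlift e n a + wlift e n b)
      = WittVector.map ((epow e n : Q ≃+* Q) : Q →+* Q) (a + b) := by
    rw [map_add, map_wlift, map_wlift, ← map_add]
  have h1 := thetaAux_sub_ghost e n (a + b) _ hx
  rw [map_add] at h1
  rw [ghost_eq, ghost_eq, ← thetaAux_eq_gh_wlift, ← thetaAux_eq_gh_wlift] at h1
  exact h1

lemma thetaAux_mul (n : ℕ) (a b : WittVector p Q) :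
    (p : R) ^ (n + 1) ∣ thetaAux e n (a * b) - thetaAux e n a * thetaAux e n b := by
  have hx : WittVector.map (Ideal.Quotient.mk (Ideal.span {(p : R)}))
      (wlift e n a * wlift e n b)
      = WittVector.map ((epow e n : Q ≃+* Q) : Q →+* Q) (a * b) := by
    rw [map_mul, map_wlift, map_wlift, ← map_mul]
  have h1 := thetaAux_sub_ghost e n (a * b) _ hx
  rw [map_mul] at h1
  have h2 := thetaAux_sub_ghost e n a _ (map_wlift e n a)
  have h3 := thetaAux_sub_ghost e n b _ (map_wlift e n b)
  set A := thetaAux e n a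
  set B := thetaAux e n b
  set A' := (WittVector.ghostComponent n (wlift e n a) : R)
  set B' := (WittVector.ghostComponent n (wlift e n b) : R)
  have heq : thetaAux e n (a * b) - A * B
      = (thetaAux e n (a * b) - A' * B') - (A - A') * B' - A * (B - B') := by ring
  rw [heq]
  exact dvd_sub (dvd_sub h1 (dvd_mul_of_dvd_left h2 _)) (dvd_mul_of_dvd_right h3 _)

lemma thetaAux_one (n : ℕ) :
    (p : R) ^ (n + 1) ∣ thetaAux e n (1 : WittVector p Q) - 1 := by
  have hx : WittVector.map (Ideal.Quotient.mk (Ideal.span {(p : R)}))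
      (1 : WittVector p R)
      = WittVector.map ((epow e n : Q ≃+* Q) : Q →+* Q) (1 : WittVector p Q) := by
    rw [map_one, map_one]
  simpa using thetaAux_sub_ghost e n 1 1 hx

lemma thetaAux_zero (n : ℕ) :
    (p : R) ^ (n + 1) ∣ thetaAux e n (0 : WittVector p Q) := by
  have hx : WittVector.map (Ideal.Quotient.mk (Ideal.span {(p : R)}))
      (0 : WittVector p R)
      = WittVector.map ((epow e n : Q ≃+* Q) : Q →+* Q) (0 : WittVector p Q) := by
    rw [map_zero, map_zero]
  simpa using thetaAux_sub_ghost e n 0 0 hx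

lemma epow_succ' (n : ℕ) (x : Q) : epow e (n + 1) x = e (epow e n x) := by
  induction n generalizing x with
  | zero => rfl
  | succ m ih => rw [epow_succ, epow_succ]; exact ih (e x)

/-- compatibility of successive approximations, assuming `e` is inverse Frobenius -/
lemma thetaAux_succ (he : ∀ x : Q, e x ^ p = x) (n : ℕ) (a : WittVector p Q) :
    (p : R) ^ (n + 1) ∣ thetaAux e (n + 1) a - thetaAux e n a := by
  set t : ℕ → R := fun i => lf (epow e (n + 1) (a.coeff i)) ^ p with ht
  have hcongr : (p : R) ^ (n + 1) ∣
      gh p n (fun i => lf (epow e n (a.coeff i))) - gh p n t := by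
    refine gh_congr fun i _ => ?_
    have : mk (t i) = epow e n (a.coeff i) := by
      rw [ht]; simp only [map_pow, mk_lf, epow_succ', he]
    rw [this, mk_lf]
  have hsplit : thetaAux e (n + 1) a
      = gh p n t + (p : R) ^ (n + 1) * lf (epow e (n + 1) (a.coeff (n + 1))) := by
    rw [thetaAux, gh, gh, Finset.sum_range_succ]
    congr 1
    · refine Finset.sum_congr rfl fun i hi => ?_
      rw [Finset.mem_range] at hi
      have h2 : p ^ ((n + 1) - i) = p * p ^ (n - i) := by
        rw [show (n + 1) - i = (n - i) + 1 by omega, pow_succ']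
      rw [ht, ← pow_mul, h2]
    · rw [Nat.sub_self, pow_zero, pow_one, mul_comm]
  have heq : thetaAux e (n + 1) a - thetaAux e n a
      = (p : R) ^ (n + 1) * lf (epow e (n + 1) (a.coeff (n + 1)))
        - (gh p n (fun i => lf (epow e n (a.coeff i))) - gh p n t) := by
    rw [hsplit, thetaAux]; ring
  rw [heq]
  exact dvd_sub (dvd_mul_right _ _) hcongr

lemma thetaAux_chain (he : ∀ x : Q, e x ^ p = x) {m n : ℕ} (h : m ≤ n) (a : WittVector p Q) :
    (p : R) ^ (m + 1) ∣ thetaAux e m a - thetaAux e n a := by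
  induction n with
  | zero => rw [Nat.le_zero.1 h]; simp
  | succ k ih =>
    rcases Nat.lt_succ_iff_lt_or_eq.1 (Nat.lt_succ_of_le h) with h' | h'
    · have h1 := ih (Nat.lt_succ_iff.1 h')
      have h2 : (p : R) ^ (m + 1) ∣ thetaAux e (k + 1) a - thetaAux e k a :=
        (pow_dvd_pow _ (by omega)).trans (thetaAux_succ e he k a)
      have heq : thetaAux e m a - thetaAux e (k + 1) a
          = (thetaAux e m a - thetaAux e k a) - (thetaAux e (k + 1) a - thetaAux e k a) := by
        ring
      rw [heq]
      exact dvd_sub h1 h2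
    · rw [h']; simp


/-! ### the limit map θ -/

lemma smod_iff (n : ℕ) (x y : R) :
    x ≡ y [SMOD ((Ideal.span {(p : R)}) ^ n • ⊤ : Ideal R)] ↔ (p : R) ^ n ∣ x - y := by
  rw [SModEq.sub_mem, Ideal.smul_eq_mul, Ideal.mul_top, Ideal.span_singleton_pow,
    Ideal.mem_span_singleton]

lemma eq_of_forall_dvd [IsAdicComplete (Ideal.span {(p : R)}) R] (x y : R)
    (h : ∀ n, (p : R) ^ n ∣ x - y) : x = y := by
  have hh : ∀ n : ℕ, (x - y) ≡ 0 [SMOD ((Ideal.span {(p : R)}) ^ n • ⊤ : Ideal R)] :=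
    fun n => (smod_iff n (x - y) 0).2 (by simpa using h n)
  exact sub_eq_zero.1 (IsAdicComplete.toIsHausdorff.haus (x - y) hh)

lemma exists_theta [IsAdicComplete (Ideal.span {(p : R)}) R]
    (he : ∀ x : Q, e x ^ p = x) (a : WittVector p Q) :
    ∃ L : R, ∀ n, (p : R) ^ (n + 1) ∣ thetaAux e n a - L := by
  obtain ⟨L, hL⟩ := IsPrecomplete.prec (IsAdicComplete.toIsPrecomplete
    (I := Ideal.span {(p : R)}) (M := R)) (f := fun n => thetaAux e n a)
    (fun {m n} h => (smod_iff _ _ _).2 ((pow_dvd_pow _ m.le_succ).trans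
      (thetaAux_chain e he h a)))
  refine ⟨L, fun n => ?_⟩
  have h1 : (p : R) ^ (n + 1) ∣ thetaAux e (n + 1) a - L := by
    have := (smod_iff _ _ _).1 (hL (n + 1))
    exact this
  have h2 := thetaAux_succ e he n a
  have heq : thetaAux e n a - L
      = (thetaAux e (n + 1) a - L) - (thetaAux e (n + 1) a - thetaAux e n a) := by ring
  rw [heq]
  exact dvd_sub h1 h2

variable [IsAdicComplete (Ideal.span {(p : R)}) R]

noncomputable def theta (he : ∀ x : Q, e x ^ p = x) (a : WittVector p Q) : R :=
  (exists_theta e he a).choose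

lemma theta_spec (he : ∀ x : Q, e x ^ p = x) (a : WittVector p Q) (n : ℕ) :
    (p : R) ^ (n + 1) ∣ thetaAux e n a - theta e he a :=
  (exists_theta e he a).choose_spec n

lemma theta_add (he : ∀ x : Q, e x ^ p = x) (a b : WittVector p Q) :
    theta e he (a + b) = theta e he a + theta e he b := by
  refine eq_of_forall_dvd (p := p) _ _ fun n => (pow_dvd_pow _ n.le_succ).trans ?_
  have h1 := theta_spec e he (a + b) n
  have h2 := theta_spec e he a n
  have h3 := theta_spec e he b n
  have h4 := thetaAux_add e n a b
  have heq : theta e he (a + b) - (theta e he a + theta e he b)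
      = (thetaAux e n (a + b) - (thetaAux e n a + thetaAux e n b))
        - (thetaAux e n (a + b) - theta e he (a + b))
        + ((thetaAux e n a - theta e he a) + (thetaAux e n b - theta e he b)) := by ring
  rw [heq]
  exact dvd_add (dvd_sub h4 h1) (dvd_add h2 h3)

lemma theta_mul (he : ∀ x : Q, e x ^ p = x) (a b : WittVector p Q) :
    theta e he (a * b) = theta e he a * theta e he b := by
  refine eq_of_forall_dvd (p := p) _ _ fun n => (pow_dvd_pow _ n.le_succ).trans ?_
  have h1 := theta_spec e he (a * b) n
  have h2 := theta_spec e he a n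
  have h3 := theta_spec e he b n
  have h4 := thetaAux_mul e n a b
  have heq : theta e he (a * b) - theta e he a * theta e he b
      = (thetaAux e n (a * b) - thetaAux e n a * thetaAux e n b)
        - (thetaAux e n (a * b) - theta e he (a * b))
        + ((thetaAux e n a - theta e he a) * thetaAux e n b
          + theta e he a * (thetaAux e n b - theta e he b)) := by ring
  rw [heq]
  exact dvd_add (dvd_sub h4 h1)
    (dvd_add (dvd_mul_of_dvd_left h2 _) (dvd_mul_of_dvd_right h3 _))

lemma theta_one (he : ∀ x : Q, e x ^ p = x) : theta e he 1 = 1 := by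
  refine eq_of_forall_dvd (p := p) _ _ fun n => (pow_dvd_pow _ n.le_succ).trans ?_
  have h1 := theta_spec e he 1 n
  have h2 := thetaAux_one e n
  have heq : theta e he 1 - 1
      = (thetaAux e n 1 - 1) - (thetaAux e n 1 - theta e he 1) := by ring
  rw [heq]
  exact dvd_sub h2 h1

lemma theta_zero (he : ∀ x : Q, e x ^ p = x) : theta e he 0 = 0 := by
  refine eq_of_forall_dvd (p := p) _ _ fun n => (pow_dvd_pow _ n.le_succ).trans ?_
  have h1 := theta_spec e he 0 n
  have h2 := thetaAux_zero e n
  have heq : theta e he 0 - 0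
      = thetaAux e n 0 - (thetaAux e n 0 - theta e he 0) := by ring
  rw [heq]
  exact dvd_sub h2 h1

/-- θ bundled as a ring homomorphism `W(R/p) →+* R`. -/
noncomputable def Theta (he : ∀ x : Q, e x ^ p = x) : WittVector p Q →+* R where
  toFun := theta e he
  map_one' := theta_one e he
  map_mul' := theta_mul e he
  map_zero' := theta_zero e he
  map_add' := theta_add e he

lemma Theta_apply (he : ∀ x : Q, e x ^ p = x) (a : WittVector p Q) :
    Theta e he a = theta e he a := rfl

lemma mk_theta (he : ∀ x : Q, e x ^ p = x) (a : WittVector p Q) :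
    mk (theta e he a) = a.coeff 0 := by
  have h0 := theta_spec e he a 0
  have : thetaAux e 0 a = lf (a.coeff 0) := by
    simp [thetaAux, gh]
  rw [this, pow_one] at h0
  have := mk_eq_of_dvd h0
  rw [mk_lf] at this
  exact this.symm


/-! ### shifting and injectivity -/

noncomputable def shiftW (x : WittVector p Q) : WittVector p Q :=
  WittVector.mk p fun i => e (x.coeff (i + 1))

lemma shiftW_coeff (x : WittVector p Q) (i : ℕ) :
    (shiftW e x).coeff i = e (x.coeff (i + 1)) := by
  simp [shiftW, WittVector.coeff_mk]

lemma dvd_lf_zero : (p : R) ∣ lf (0 : Q) := by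
  have : mk (lf (0 : Q)) = mk 0 := by rw [mk_lf, map_zero]
  simpa using (mk_eq_iff _ _).1 this

lemma dvd_lf_zero_pow (n : ℕ) : (p : R) ^ (n + 1) ∣ lf (0 : Q) ^ p ^ (n + 1) := by
  have h1 : (p : R) ^ (p ^ (n + 1)) ∣ lf (0 : Q) ^ p ^ (n + 1) :=
    pow_dvd_pow_of_dvd dvd_lf_zero _
  exact (pow_dvd_pow (p : R) (le_of_lt (Nat.lt_pow_self (Fact.out (p := p.Prime)).one_lt
    : n + 1 < p ^ (n + 1)))).trans h1

lemma thetaAux_shift (n : ℕ) (x : WittVector p Q) :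
    thetaAux e (n + 1) x
      = lf (epow e (n + 1) (x.coeff 0)) ^ p ^ (n + 1)
        + (p : R) * thetaAux e n (shiftW e x) := by
  rw [thetaAux, thetaAux, gh, gh, Finset.sum_range_succ']
  rw [Finset.mul_sum]
  rw [add_comm]
  congr 1
  · simp
  · apply Finset.sum_congr rfl
    intro i _
    have h1 : epow e n ((shiftW e x).coeff i) = epow e (n + 1) (x.coeff (i + 1)) := by
      rw [shiftW_coeff, epow_succ]
    rw [h1, pow_succ', mul_assoc, Nat.succ_sub_succ]

lemma theta_shift (he : ∀ x : Q, e x ^ p = x) (x : WittVector p Q) (h0 : x.coeff 0 = 0) :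
    theta e he x = (p : R) * theta e he (shiftW e x) := by
  refine eq_of_forall_dvd (p := p) _ _ fun n => ?_
  refine (pow_dvd_pow _ n.le_succ).trans ?_
  have h1 := theta_spec e he x (n + 1)
  have h2 := theta_spec e he (shiftW e x) n
  have key := thetaAux_shift e n x
  rw [h0, map_zero] at key
  have h3 : (p : R) ^ (n + 1) ∣ lf (0 : Q) ^ p ^ (n + 1) := dvd_lf_zero_pow n
  have heq : theta e he x - (p : R) * theta e he (shiftW e x)
      = (thetaAux e (n + 1) x - theta e he x) * (-1)
        + lf (0 : Q) ^ p ^ (n + 1)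
        + (p : R) * (thetaAux e n (shiftW e x) - theta e he (shiftW e x)) := by
    rw [key]; ring
  rw [heq]
  exact dvd_add (dvd_add (Dvd.dvd.mul_right ((pow_dvd_pow _ (by omega)).trans h1) _) h3)
    (h2.mul_left _)

lemma theta_coeff_zero (he : ∀ x : Q, e x ^ p = x) (a : WittVector p Q)
    (h : theta e he a = 0) : a.coeff 0 = 0 := by
  have h1 := mk_theta e he a
  rw [h, map_zero] at h1
  exact h1.symm

lemma coeff_eq_zero_of_theta (hnzd : (p : R) ∈ nonZeroDivisors R)
    (he : ∀ x : Q, e x ^ p = x) :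
    ∀ (n : ℕ) (a : WittVector p Q), theta e he a = 0 → a.coeff n = 0 := by
  intro n
  induction n with
  | zero => exact fun a h => theta_coeff_zero e he a h
  | succ k ih =>
    intro a h
    have h0 : a.coeff 0 = 0 := theta_coeff_zero e he a h
    have hsh : theta e he (shiftW e a) = 0 := by
      have h1 := theta_shift e he a h0
      rw [h] at h1
      have h2 : theta e he (shiftW e a) * (p : R) = 0 := by
        rw [mul_comm]; exact h1.symm
      exact (mem_nonZeroDivisors_iff.1 hnzd).2 _ h2
    have h3 := ih (shiftW e a) hsh
    rw [shiftW_coeff] at h3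
    have := e.injective (h3.trans (map_zero e).symm)
    exact this

lemma theta_injective (hnzd : (p : R) ∈ nonZeroDivisors R) (he : ∀ x : Q, e x ^ p = x) :
    Function.Injective (Theta e he) := by
  intro a b hab
  have h0 : Theta e he (a - b) = 0 := by rw [map_sub, hab, sub_self]
  have hc : ∀ n, (a - b).coeff n = 0 := fun n => coeff_eq_zero_of_theta e hnzd he n _ h0
  have hz : a - b = 0 := by
    ext n
    rw [hc n, WittVector.zero_coeff]
  exact sub_eq_zero.1 hz

lemma dvd_theta_of_coeff_zero (he : ∀ x : Q, e x ^ p = x) :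
    ∀ (n : ℕ) (x : WittVector p Q), (∀ j ≤ n, x.coeff j = 0) →
      (p : R) ^ (n + 1) ∣ theta e he x := by
  intro n
  induction n with
  | zero =>
    intro x hx
    rw [pow_one, theta_shift e he x (hx 0 le_rfl)]
    exact dvd_mul_right _ _
  | succ k ih =>
    intro x hx
    rw [theta_shift e he x (hx 0 (Nat.zero_le _))]
    have hsh : ∀ j ≤ k, (shiftW e x).coeff j = 0 := fun j hj => by
      rw [shiftW_coeff, hx (j + 1) (by omega), map_zero]
    rw [pow_succ']
    exact mul_dvd_mul_left _ (ih (shiftW e x) hsh)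


/-! ### surjectivity -/

lemma select_coeff (P : ℕ → Prop) [DecidablePred P] (x : WittVector p Q) (i : ℕ) :
    (WittVector.select P x).coeff i = if P i then x.coeff i else 0 := by
  simp [WittVector.select, WittVector.coeff_mk]

lemma init_coeff (x : WittVector p Q) (n i : ℕ) :
    (WittVector.init n x).coeff i = if i < n then x.coeff i else 0 := by
  classical
  rw [WittVector.init, select_coeff]

lemma init_eq_zero_of_coeff_zero (z : WittVector p Q) (n : ℕ)
    (hz : ∀ i ≤ n, z.coeff i = 0) : WittVector.init (n + 1) z = 0 := by
  ext i
  rw [init_coeff, WittVector.zero_coeff]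
  split_ifs with h
  · exact hz i (by omega)
  · rfl

lemma coeff_add_of_init_zero (x z : WittVector p Q) (n : ℕ)
    (hz : ∀ i ≤ n, z.coeff i = 0) {j : ℕ} (hj : j ≤ n) :
    (x + z).coeff j = x.coeff j := by
  have h1 : WittVector.init (n + 1) (x + z) = WittVector.init (n + 1) x := by
    rw [WittVector.init_add, init_eq_zero_of_coeff_zero z n hz, add_zero,
      WittVector.init_init]
  have h2 := congrArg (fun w => WittVector.coeff w j) h1
  simpa [init_coeff, Nat.lt_succ_iff.2 hj] using h2

lemma coeff_sub_of_init_eq (x y : WittVector p Q) (n : ℕ)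
    (h : ∀ i ≤ n, x.coeff i = y.coeff i) {j : ℕ} (hj : j ≤ n) :
    (x - y).coeff j = 0 := by
  have h1 : WittVector.init (n + 1) x = WittVector.init (n + 1) y := by
    ext i
    rw [init_coeff, init_coeff]
    split_ifs with hi
    · exact h i (by omega)
    · rfl
  have h2 : WittVector.init (n + 1) (x - y) = 0 := by
    rw [WittVector.init_sub, h1, sub_self]
    ext i
    rw [init_coeff, WittVector.zero_coeff]
    split_ifs <;> simp [WittVector.zero_coeff]
  have h3 := congrArg (fun w => WittVector.coeff w j) h2
  simpa [init_coeff, Nat.lt_succ_iff.2 hj] using h3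

variable [CharP (R ⧸ Ideal.span {(p : R)}) p]

lemma coeff_mul_p_pow : ∀ (k : ℕ) (y : WittVector p Q) (j : ℕ), j < k →
    (y * (p : WittVector p Q) ^ k).coeff j = 0 := by
  intro k
  induction k with
  | zero => intro y j hj; omega
  | succ k ih =>
    intro y j hj
    have hsplit : y * (p : WittVector p Q) ^ (k + 1)
        = (y * (p : WittVector p Q) ^ k) * (p : WittVector p Q) := by ring
    rw [hsplit]
    rcases j with _ | j
    · exact WittVector.mul_charP_coeff_zero _
    · rw [WittVector.mul_charP_coeff_succ, ih y j (by omega), zero_pow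
        (Fact.out (p := p.Prime)).ne_zero]

/-! the recursive Teichmüller expansion of an element of `R` -/

lemma exists_div (he : ∀ x : Q, e x ^ p = x) (x : R) :
    ∃ c : R, x - theta e he (WittVector.teichmuller p (mk x)) = (p : R) * c := by
  have h1 : mk (theta e he (WittVector.teichmuller p (mk x))) = mk x := by
    rw [mk_theta, WittVector.teichmuller_coeff_zero]
  exact (mk_eq_iff _ _).1 h1.symm

noncomputable def rs (he : ∀ x : Q, e x ^ p = x) (r : R) : ℕ → R
  | 0 => r
  | k + 1 => (exists_div e he (rs he r k)).choose

lemma rs_step (he : ∀ x : Q, e x ^ p = x) (r : R) (k : ℕ) :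
    rs e he r k = theta e he (WittVector.teichmuller p (mk (rs e he r k)))
      + (p : R) * rs e he r (k + 1) := by
  have := (exists_div e he (rs e he r k)).choose_spec
  rw [show rs e he r (k + 1) = (exists_div e he (rs e he r k)).choose from rfl]
  linear_combination this

lemma expansion (he : ∀ x : Q, e x ^ p = x) (r : R) (n : ℕ) :
    r = (∑ i ∈ Finset.range (n + 1),
        theta e he (WittVector.teichmuller p (mk (rs e he r i))) * (p : R) ^ i)
      + (p : R) ^ (n + 1) * rs e he r (n + 1) := by
  induction n with
  | zero =>
    simpa [show rs e he r 0 = r from rfl] using rs_step e he r 0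
  | succ n ih =>
    rw [Finset.sum_range_succ]
    have h1 := rs_step e he r (n + 1)
    calc r = (∑ i ∈ Finset.range (n + 1),
          theta e he (WittVector.teichmuller p (mk (rs e he r i))) * (p : R) ^ i)
          + (p : R) ^ (n + 1) * rs e he r (n + 1) := ih
    _ = _ := by linear_combination ((p : R) ^ (n + 1)) * h1

/-- the partial sums in `W(Q)` -/
noncomputable def partialA (he : ∀ x : Q, e x ^ p = x) (r : R) (n : ℕ) : WittVector p Q :=
  ∑ i ∈ Finset.range (n + 1),
    WittVector.teichmuller p (mk (rs e he r i)) * (p : WittVector p Q) ^ i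

lemma theta_partialA (he : ∀ x : Q, e x ^ p = x) (r : R) (n : ℕ) :
    theta e he (partialA e he r n)
      = ∑ i ∈ Finset.range (n + 1),
          theta e he (WittVector.teichmuller p (mk (rs e he r i))) * (p : R) ^ i := by
  have h1 : theta e he (partialA e he r n) = Theta e he (partialA e he r n) := rfl
  rw [h1, partialA, map_sum]
  refine Finset.sum_congr rfl fun i _ => ?_
  rw [map_mul, map_pow, map_natCast]
  rfl

lemma partialA_coeff_stable (he : ∀ x : Q, e x ^ p = x) (r : R) {j n : ℕ} (hj : j ≤ n) :
    (partialA e he r n).coeff j = (partialA e he r j).coeff j := by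
  induction n with
  | zero => rw [Nat.le_zero.1 hj]
  | succ n ih =>
    rcases Nat.lt_succ_iff_lt_or_eq.1 (Nat.lt_succ_of_le hj) with h' | h'
    · have hj' : j ≤ n := by omega
      have hA : partialA e he r (n + 1) = partialA e he r n
          + WittVector.teichmuller p (mk (rs e he r (n + 1)))
            * (p : WittVector p Q) ^ (n + 1) := by
        rw [partialA, partialA, Finset.sum_range_succ]
      rw [hA, coeff_add_of_init_zero _ _ n (fun i hi => coeff_mul_p_pow (n + 1) _ i
        (by omega)) hj']
      exact ih hj'
    · rw [h']

/-- the limit Witt vector -/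
noncomputable def limA (he : ∀ x : Q, e x ^ p = x) (r : R) : WittVector p Q :=
  WittVector.mk p fun j => (partialA e he r j).coeff j

lemma limA_coeff_eq (he : ∀ x : Q, e x ^ p = x) (r : R) {j n : ℕ} (hj : j ≤ n) :
    (limA e he r).coeff j = (partialA e he r n).coeff j := by
  rw [limA, WittVector.coeff_mk, partialA_coeff_stable e he r hj]

lemma theta_surjective (he : ∀ x : Q, e x ^ p = x) :
    Function.Surjective (Theta e he) := by
  intro r
  refine ⟨limA e he r, ?_⟩
  refine eq_of_forall_dvd (p := p) _ _ fun n => (pow_dvd_pow _ n.le_succ).trans ?_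
  have h1 : (p : R) ^ (n + 1) ∣ theta e he (limA e he r - partialA e he r n) :=
    dvd_theta_of_coeff_zero e he n _ (fun j hj =>
      coeff_sub_of_init_eq _ _ n (fun i hi => limA_coeff_eq e he r hi) hj)
  have h2 : theta e he (limA e he r - partialA e he r n)
      = theta e he (limA e he r) - theta e he (partialA e he r n) :=
    map_sub (Theta e he) _ _
  have h3 := expansion e he r n
  have heq : Theta e he (limA e he r) - r
      = theta e he (limA e he r - partialA e he r n)
        - (p : R) ^ (n + 1) * rs e he r (n + 1) := by
    rw [h2, Theta_apply]
    linear_combination theta_partialA e he r n - h3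
  rw [heq]
  exact dvd_sub h1 (dvd_mul_right _ _)


/-! ### uniqueness -/

lemma epow_pow (he : ∀ x : Q, e x ^ p = x) (n : ℕ) (x : Q) :
    (epow e n x) ^ p ^ n = x := by
  induction n generalizing x with
  | zero => simp
  | succ n ih => rw [epow_succ', pow_succ', pow_mul, he, ih]

lemma g_fixes_teichmuller (he : ∀ x : Q, e x ^ p = x) (g : R →+* R)
    (hg : ∀ r : R, mk (g r) = mk r) (d : Q) :
    g (theta e he (WittVector.teichmuller p d)) = theta e he (WittVector.teichmuller p d) := by
  refine eq_of_forall_dvd (p := p) _ _ fun n => (pow_dvd_pow _ n.le_succ).trans ?_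
  have h1 : (WittVector.teichmuller p (epow e n d)) ^ p ^ n
      = WittVector.teichmuller p d := by
    rw [← map_pow, epow_pow e he n d]
  have hsplit : theta e he (WittVector.teichmuller p d)
      = theta e he (WittVector.teichmuller p (epow e n d)) ^ p ^ n := by
    conv_lhs => rw [← h1]
    exact map_pow (Theta e he) _ _
  set u := theta e he (WittVector.teichmuller p (epow e n d)) with hu
  have hd : (p : R) ∣ g u - u := (mk_eq_iff _ _).1 (hg u)
  have h2 := dvd_sub_pow_of_dvd_sub hd n
  rw [hsplit, map_pow]
  exact h2

lemma g_eq_id (he : ∀ x : Q, e x ^ p = x) (g : R →+* R)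
    (hg : ∀ r : R, mk (g r) = mk r) (r : R) : g r = r := by
  refine eq_of_forall_dvd (p := p) _ _ fun n => (pow_dvd_pow _ n.le_succ).trans ?_
  have h3 := expansion e he r n
  have h4 : g r = (∑ i ∈ Finset.range (n + 1),
      theta e he (WittVector.teichmuller p (mk (rs e he r i))) * (p : R) ^ i)
      + (p : R) ^ (n + 1) * g (rs e he r (n + 1)) := by
    conv_lhs => rw [h3]
    rw [map_add, map_mul, map_sum, map_pow, map_natCast]
    congr 1
    refine Finset.sum_congr rfl fun i _ => ?_
    rw [map_mul, map_pow, map_natCast, g_fixes_teichmuller e he g hg]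
  have heq : g r - r = (p : R) ^ (n + 1) * (g (rs e he r (n + 1)) - rs e he r (n + 1)) := by
    linear_combination h4 - h3
  rw [heq]
  exact dvd_mul_right _ _

end Stmt10Aux

theorem stmt10 (p : ℕ) [Fact p.Prime] (R : Type) [CommRing R]
    -- `p` is not a zero-divisor in `R`
    (hnzd : (p : R) ∈ nonZeroDivisors R)
    -- `R` is complete and Hausdorff for the `p`-adic topology
    [IsAdicComplete (Ideal.span {(p : R)}) R]
    -- `R/pR` is a perfect ring of characteristic `p`
    [CharP (R ⧸ Ideal.span {(p : R)}) p]
    (hperf : Function.Bijective (fun x : R ⧸ Ideal.span {(p : R)} => x ^ p)) :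
    ∃ φ : R →+* WittVector p (R ⧸ Ideal.span {(p : R)}),
      (∀ r : R, (φ r).coeff 0 = Ideal.Quotient.mk _ r) ∧
      Function.Bijective φ ∧
      ∀ ψ : R →+* WittVector p (R ⧸ Ideal.span {(p : R)}),
        (∀ r : R, (ψ r).coeff 0 = Ideal.Quotient.mk _ r) → ψ = φ := by
  classical
  set Q := R ⧸ Ideal.span {(p : R)} with hQ
  letI : ExpChar Q p := ExpChar.prime Fact.out
  have hF : Function.Bijective (frobenius Q p) := by
    have hco : ⇑(frobenius Q p) = fun x : Q => x ^ p := funext fun x => frobenius_def p x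
    rw [hco]; exact hperf
  let E : Q ≃+* Q := RingEquiv.ofBijective (frobenius Q p) hF
  let e : Q ≃+* Q := E.symm
  have he : ∀ x : Q, e x ^ p = x := fun x => by
    have h1 : E (e x) = x := E.apply_symm_apply x
    have h2 : E (e x) = (e x) ^ p := frobenius_def p (e x)
    rw [← h2, h1]
  have hbij : Function.Bijective (Stmt10Aux.Theta e he) :=
    ⟨Stmt10Aux.theta_injective e hnzd he, Stmt10Aux.theta_surjective e he⟩
  let E2 : WittVector p Q ≃+* R := RingEquiv.ofBijective (Stmt10Aux.Theta e he) hbij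
  refine ⟨(E2.symm : R ≃+* WittVector p Q).toRingHom, ?_, ?_, ?_⟩
  · intro r
    have h1 := Stmt10Aux.mk_theta e he (E2.symm r)
    have h2 : Stmt10Aux.theta e he (E2.symm r) = r := E2.apply_symm_apply r
    rw [h2] at h1
    exact h1.symm
  · exact E2.symm.bijective
  · intro ψ hψ
    have hg : ∀ r : R, Ideal.Quotient.mk (Ideal.span {(p : R)})
        ((Stmt10Aux.Theta e he).comp ψ r) = Ideal.Quotient.mk _ r := fun r => by
      have := Stmt10Aux.mk_theta e he (ψ r)
      rw [RingHom.comp_apply]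
      rw [Stmt10Aux.Theta_apply, this, hψ r]
    have hid := Stmt10Aux.g_eq_id e he ((Stmt10Aux.Theta e he).comp ψ) hg
    refine RingHom.ext fun r => ?_
    have h1 : Stmt10Aux.Theta e he (ψ r) = r := hid r
    have h2 : Stmt10Aux.Theta e he (E2.symm r) = r := E2.apply_symm_apply r
    exact hbij.1 (h1.trans h2.symm)
end
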